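/- The minimal fixed points form a non-decreasing sequence: ξ_k ≤ ξ_{k+1} for every k ≥ 1. -/
import Mathlib


open MeasureTheory Set Filter

/-- The value functions of the optimal online alternating-subsequence selection
problem: `v 0 y = 0` and
`v (k+1) y = y * v k y + ∫ x in y..1, max (v k y) (1 + v k (1 - x))`. -/
noncomputable def v : ℕ → ℝ → ℝ
  | 0, _ => 0
  | (k+1), y => y * v k y + ∫ x in y..(1:ℝ), max (v k y) (1 + v k (1 - x))

lemma v_zero (y : ℝ) : v 0 y = 0 := rfl

lemma v_succ (k : ℕ) (y : ℝ) :
    v (k+1) y = y * v k y + ∫ x in y..(1:ℝ), max (v k y) (1 + v k (1 - x)) := rfl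

section aux

variable {w : ℝ → ℝ}

lemma aux_mono (hw : AntitoneOn w (Icc (0:ℝ) 1)) (c : ℝ) :
    MonotoneOn (fun x => max c (1 + w (1 - x))) (Icc (0:ℝ) 1) := by
  intro x hx x' hx' hxx'
  have h1 : (1 - x') ∈ Icc (0:ℝ) 1 := ⟨by linarith [hx'.2], by linarith [hx'.1]⟩
  have h2 : (1 - x) ∈ Icc (0:ℝ) 1 := ⟨by linarith [hx.2], by linarith [hx.1]⟩
  have := hw h1 h2 (by linarith)
  exact max_le_max le_rfl (by linarith)

lemma aux_anti (hw : AntitoneOn w (Icc (0:ℝ) 1)) (c : ℝ) :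
    AntitoneOn (fun s => max c (1 + w s)) (Icc (0:ℝ) 1) := by
  intro x hx x' hx' hxx'
  have := hw hx hx' hxx'
  exact max_le_max le_rfl (by linarith)

lemma aux_intble (hw : AntitoneOn w (Icc (0:ℝ) 1)) (c : ℝ) {a b : ℝ}
    (ha : a ∈ Icc (0:ℝ) 1) (hb : b ∈ Icc (0:ℝ) 1) :
    IntervalIntegrable (fun x => max c (1 + w (1 - x))) volume a b := by
  apply MonotoneOn.intervalIntegrable
  have hsub : uIcc a b ⊆ Icc (0:ℝ) 1 := by
    rw [show Icc (0:ℝ) 1 = uIcc (0:ℝ) 1 by rw [uIcc_of_le]; norm_num]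
    exact uIcc_subset_uIcc (by rw [uIcc_of_le (by norm_num : (0:ℝ) ≤ 1)]; exact ha)
      (by rw [uIcc_of_le (by norm_num : (0:ℝ) ≤ 1)]; exact hb)
  exact (aux_mono hw c).mono hsub

lemma aux_intble' (hw : AntitoneOn w (Icc (0:ℝ) 1)) (c : ℝ) {a b : ℝ}
    (ha : a ∈ Icc (0:ℝ) 1) (hb : b ∈ Icc (0:ℝ) 1) :
    IntervalIntegrable (fun s => max c (1 + w s)) volume a b := by
  apply AntitoneOn.intervalIntegrable
  have hsub : uIcc a b ⊆ Icc (0:ℝ) 1 := by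
    rw [show Icc (0:ℝ) 1 = uIcc (0:ℝ) 1 by rw [uIcc_of_le]; norm_num]
    exact uIcc_subset_uIcc (by rw [uIcc_of_le (by norm_num : (0:ℝ) ≤ 1)]; exact ha)
      (by rw [uIcc_of_le (by norm_num : (0:ℝ) ≤ 1)]; exact hb)
  exact (aux_anti hw c).mono hsub

end aux

lemma v_antitoneOn : ∀ k, AntitoneOn (v k) (Icc (0:ℝ) 1) := by
  intro k
  induction k with
  | zero => intro a _ b _ _; simp [v_zero]
  | succ k ih =>
      intro y hy y' hy' hle
      simp only [v_succ]
      have hcc' : v k y' ≤ v k y := ih hy hy' hle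
      have hy01 : (0:ℝ) ≤ y := hy.1
      have h1 : y' ∈ Icc (0:ℝ) 1 := hy'
      have hone : (1:ℝ) ∈ Icc (0:ℝ) 1 := by norm_num
      -- split integral at y'
      have hint1 : IntervalIntegrable (fun x => max (v k y) (1 + v k (1 - x))) volume y y' :=
        aux_intble ih _ hy hy'
      have hint2 : IntervalIntegrable (fun x => max (v k y) (1 + v k (1 - x))) volume y' 1 :=
        aux_intble ih _ hy' hone
      have hsplit := intervalIntegral.integral_add_adjacent_intervals hint1 hint2
      rw [← hsplit]
      have hlow : (y' - y) * v k y ≤ ∫ x in y..y', max (v k y) (1 + v k (1 - x)) := by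
        have := intervalIntegral.integral_mono_on hle
          (intervalIntegrable_const (c := v k y)) hint1
          (fun x _ => le_max_left _ _)
        simpa using this
      have hmono2 : (∫ x in y'..1, max (v k y') (1 + v k (1 - x)))
          ≤ ∫ x in y'..1, max (v k y) (1 + v k (1 - x)) := by
        apply intervalIntegral.integral_mono_on hy'.2 (aux_intble ih _ hy' hone)
          (aux_intble ih _ hy' hone)
        intro x _
        exact max_le_max hcc' le_rfl
      nlinarith [hy'.1]

lemma v_nonneg : ∀ k, ∀ y ∈ Icc (0:ℝ) 1, 0 ≤ v k y := by
  intro k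
  induction k with
  | zero => intro y _; simp [v_zero]
  | succ k ih =>
      intro y hy
      rw [v_succ]
      have h0 : (0:ℝ) ≤ ∫ x in y..(1:ℝ), max (v k y) (1 + v k (1 - x)) := by
        rw [← intervalIntegral.integral_zero (a := y) (b := (1:ℝ)) (μ := volume)]
        apply intervalIntegral.integral_mono_on hy.2 (intervalIntegrable_const (c := (0:ℝ)))
          (aux_intble (v_antitoneOn k) _ hy (by norm_num))
        intro x hx
        have : (1 - x) ∈ Icc (0:ℝ) 1 := ⟨by linarith [hx.2], by linarith [hx.1, hy.1]⟩
        have := ih (1-x) this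
        have : (0:ℝ) ≤ 1 + v k (1-x) := by linarith
        exact le_trans this (le_max_right _ _)
      have := ih y hy
      nlinarith [hy.1]

lemma v_le (k : ℕ) : ∀ y ∈ Icc (0:ℝ) 1, v k y ≤ k := by
  induction k with
  | zero => intro y _; simp [v_zero]
  | succ k ih =>
      intro y hy
      rw [v_succ]
      have hup : (∫ x in y..(1:ℝ), max (v k y) (1 + v k (1 - x)))
          ≤ (1 - y) * (1 + k) := by
        have := intervalIntegral.integral_mono_on hy.2
          (aux_intble (v_antitoneOn k) _ hy (by norm_num))
          (intervalIntegrable_const (c := 1 + (k:ℝ)))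
          (fun x hx => by
            have h1x : (1 - x) ∈ Icc (0:ℝ) 1 := ⟨by linarith [hx.2], by linarith [hx.1, hy.1]⟩
            have h1 := ih (1-x) h1x
            have h2 := ih y hy
            exact max_le (by linarith) (by linarith))
        rw [intervalIntegral.integral_const, smul_eq_mul] at this
        linarith
      have h2 := ih y hy
      have h3 := v_nonneg k y hy
      push_cast
      nlinarith [hy.1, hy.2]

-- mono in k
lemma v_mono_k (k : ℕ) : ∀ y ∈ Icc (0:ℝ) 1, v k y ≤ v (k+1) y := by
  intro y hy
  rw [v_succ]
  have hlow : (1 - y) * v k y ≤ ∫ x in y..(1:ℝ), max (v k y) (1 + v k (1 - x)) := by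
    have := intervalIntegral.integral_mono_on hy.2
      (intervalIntegrable_const (c := v k y))
      (aux_intble (v_antitoneOn k) _ hy (by norm_num))
      (fun x _ => le_max_left _ _)
    rw [intervalIntegral.integral_const, smul_eq_mul] at this
    linarith
  nlinarith [hy.1]

-- Lipschitz-type bound
lemma v_lip (k : ℕ) : ∀ y ∈ Icc (0:ℝ) 1, ∀ y' ∈ Icc (0:ℝ) 1, y ≤ y' →
    v k y - v k y' ≤ (k:ℝ)^2 * (y' - y) := by
  induction k with
  | zero => intro y _ y' _ _; simp [v_zero]
  | succ k ih =>
      intro y hy y' hy' hle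
      have hone : (1:ℝ) ∈ Icc (0:ℝ) 1 := by norm_num
      have hcc' : v k y' ≤ v k y := v_antitoneOn k hy hy' hle
      have hIH := ih y hy y' hy' hle
      simp only [v_succ]
      have hint1 : IntervalIntegrable (fun x => max (v k y) (1 + v k (1 - x))) volume y y' :=
        aux_intble (v_antitoneOn k) _ hy hy'
      have hint2 : IntervalIntegrable (fun x => max (v k y) (1 + v k (1 - x))) volume y' 1 :=
        aux_intble (v_antitoneOn k) _ hy' hone
      rw [← intervalIntegral.integral_add_adjacent_intervals hint1 hint2]
      -- middle piece bound
      have hmid : (∫ x in y..y', max (v k y) (1 + v k (1 - x))) ≤ (y' - y) * (1 + k) := by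
        have := intervalIntegral.integral_mono_on hle hint1
          (intervalIntegrable_const (c := 1 + (k:ℝ)))
          (fun x hx => by
            have h1x : (1 - x) ∈ Icc (0:ℝ) 1 := ⟨by linarith [hx.2, hy'.2], by linarith [hx.1, hy.1]⟩
            have h1 := v_le k (1-x) h1x
            have h2 := v_le k y hy
            exact max_le (by linarith) (by linarith))
        rw [intervalIntegral.integral_const, smul_eq_mul] at this
        linarith
      -- tail piece bound
      have htail : (∫ x in y'..1, max (v k y) (1 + v k (1 - x)))
          - (∫ x in y'..1, max (v k y') (1 + v k (1 - x)))
          ≤ (1 - y') * ((k:ℝ)^2 * (y' - y)) := by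
        have h1 : (∫ x in y'..1, max (v k y) (1 + v k (1 - x)))
            ≤ ∫ x in y'..1, (max (v k y') (1 + v k (1 - x)) + (v k y - v k y')) := by
          apply intervalIntegral.integral_mono_on hy'.2
            (aux_intble (v_antitoneOn k) _ hy' hone)
            ((aux_intble (v_antitoneOn k) _ hy' hone).add
              (intervalIntegrable_const (c := v k y - v k y')))
          intro x _
          have : max (v k y) (1 + v k (1-x))
              ≤ max (v k y' + (v k y - v k y')) (1 + v k (1-x) + (v k y - v k y')) :=
            max_le_max (by linarith) (by linarith)
          calc max (v k y) (1 + v k (1-x))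
              ≤ max (v k y' + (v k y - v k y')) (1 + v k (1-x) + (v k y - v k y')) := this
            _ = max (v k y') (1 + v k (1 - x)) + (v k y - v k y') := by
                rw [← max_add_add_right]
        rw [intervalIntegral.integral_add (aux_intble (v_antitoneOn k) _ hy' hone)
          (intervalIntegrable_const (c := v k y - v k y')),
          intervalIntegral.integral_const, smul_eq_mul] at h1
        nlinarith [hy'.2]
      have hnn := v_nonneg k y' hy'
      push_cast
      nlinarith [hy.1, hy'.1, hy'.2]

lemma v_intble (k : ℕ) {a b : ℝ} (ha : a ∈ Icc (0:ℝ) 1) (hb : b ∈ Icc (0:ℝ) 1) :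
    IntervalIntegrable (v k) volume a b := by
  apply AntitoneOn.intervalIntegrable
  have hsub : uIcc a b ⊆ Icc (0:ℝ) 1 := by
    rw [show Icc (0:ℝ) 1 = uIcc (0:ℝ) 1 by rw [uIcc_of_le]; norm_num]
    exact uIcc_subset_uIcc (by rw [uIcc_of_le (by norm_num : (0:ℝ) ≤ 1)]; exact ha)
      (by rw [uIcc_of_le (by norm_num : (0:ℝ) ≤ 1)]; exact hb)
  exact (v_antitoneOn k).mono hsub

lemma oneadd_intble (k : ℕ) {a b : ℝ} (ha : a ∈ Icc (0:ℝ) 1) (hb : b ∈ Icc (0:ℝ) 1) :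
    IntervalIntegrable (fun s => 1 + v k s) volume a b :=
  (intervalIntegrable_const (c := (1:ℝ))).add (v_intble k ha hb)

lemma v_succ_z (k : ℕ) (y : ℝ) :
    v (k+1) y = y * v k y + ∫ s in (0:ℝ)..(1-y), max (v k y) (1 + v k s) := by
  rw [v_succ]
  congr 1
  have := intervalIntegral.integral_comp_sub_left
    (fun s => max (v k y) (1 + v k s)) 1 (a := y) (b := 1)
  simpa using this

-- (i)
lemma id_i (k : ℕ) {y : ℝ} (hy : y ∈ Icc (0:ℝ) (1/2)) :
    v (k+1) (1-y) = (1-y) * v k (1-y) + ∫ s in (0:ℝ)..y, (1 + v k s) := by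
  have h1y : (1-y) ∈ Icc (0:ℝ) 1 := ⟨by linarith [hy.2], by linarith [hy.1]⟩
  rw [v_succ_z]
  have : (1 - (1 - y)) = y := by ring
  rw [this]
  congr 1
  apply intervalIntegral.integral_congr
  intro s hs
  rw [uIcc_of_le hy.1] at hs
  have hs01 : s ∈ Icc (0:ℝ) 1 := ⟨hs.1, by linarith [hs.2, hy.2]⟩
  have : v k (1-y) ≤ v k s := v_antitoneOn k hs01 h1y (by linarith [hs.2, hy.2])
  simp only [max_eq_right (by linarith : v k (1-y) ≤ 1 + v k s)]

-- (ii)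
lemma id_ii (k : ℕ) {y : ℝ} (hy : y ∈ Icc (0:ℝ) (1/2)) :
    v (k+1) y = y * v k y + ((∫ s in (0:ℝ)..y, (1 + v k s))
      + ∫ s in y..(1-y), max (v k y) (1 + v k s)) := by
  have hy01 : y ∈ Icc (0:ℝ) 1 := ⟨hy.1, by linarith [hy.2]⟩
  have h1y : (1-y) ∈ Icc (0:ℝ) 1 := ⟨by linarith [hy.2], by linarith [hy.1]⟩
  rw [v_succ_z]
  congr 1
  rw [← intervalIntegral.integral_add_adjacent_intervals
    (aux_intble' (v_antitoneOn k) _ (by norm_num) hy01)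
    (aux_intble' (v_antitoneOn k) _ hy01 h1y)]
  congr 1
  apply intervalIntegral.integral_congr
  intro s hs
  rw [uIcc_of_le hy.1] at hs
  have hs01 : s ∈ Icc (0:ℝ) 1 := ⟨hs.1, by linarith [hs.2, hy.2]⟩
  have : v k y ≤ v k s := v_antitoneOn k hs01 hy01 hs.2
  simp only [max_eq_right (by linarith : v k y ≤ 1 + v k s)]

-- (iii)
lemma id_iii (k : ℕ) {y : ℝ} (hy : y ∈ Icc (1/2:ℝ) 1) :
    v (k+1) y = y * v k y + ∫ s in (0:ℝ)..(1-y), (1 + v k s) := by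
  have hy01 : y ∈ Icc (0:ℝ) 1 := ⟨by linarith [hy.1], hy.2⟩
  rw [v_succ_z]
  congr 1
  apply intervalIntegral.integral_congr
  intro s hs
  rw [uIcc_of_le (by linarith [hy.2] : (0:ℝ) ≤ 1 - y)] at hs
  have hs01 : s ∈ Icc (0:ℝ) 1 := ⟨hs.1, by linarith [hs.2, hy.1]⟩
  have : v k y ≤ v k s := v_antitoneOn k hs01 hy01 (by linarith [hs.2, hy.1])
  simp only [max_eq_right (by linarith : v k y ≤ 1 + v k s)]

-- f-identity
lemma id_f (k : ℕ) {y : ℝ} (hy : y ∈ Icc (0:ℝ) (1/2)) :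
    v (k+1) y - v (k+1) (1-y) = y * v k y - (1-y) * v k (1-y)
      + ∫ s in y..(1-y), max (v k y) (1 + v k s) := by
  rw [id_i k hy, id_ii k hy]; ring

-- dd-identity on [1/2,1]
lemma id_dd (k : ℕ) {y : ℝ} (hy : y ∈ Icc (1/2:ℝ) 1) :
    v (k+2) y - v (k+1) y = y * (v (k+1) y - v k y)
      + ∫ s in (0:ℝ)..(1-y), (v (k+1) s - v k s) := by
  have h1y : (1-y) ∈ Icc (0:ℝ) 1 := ⟨by linarith [hy.2], by linarith [hy.1]⟩
  have e1 := id_iii (k+1) hy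
  have e2 := id_iii k hy
  have e3 : (∫ s in (0:ℝ)..(1-y), (v (k+1) s - v k s))
      = (∫ s in (0:ℝ)..(1-y), (1 + v (k+1) s)) - ∫ s in (0:ℝ)..(1-y), (1 + v k s) := by
    rw [← intervalIntegral.integral_sub (oneadd_intble (k+1) (by norm_num) h1y)
      (oneadd_intble k (by norm_num) h1y)]
    congr 1; funext s; ring
  rw [e1, e2] at *
  rw [e3]; ring

lemma dd_intble (k : ℕ) {a b : ℝ} (ha : a ∈ Icc (0:ℝ) 1) (hb : b ∈ Icc (0:ℝ) 1) :
    IntervalIntegrable (fun s => v (k+1) s - v k s) volume a b :=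
  (v_intble (k+1) ha hb).sub (v_intble k ha hb)

lemma v_one (y : ℝ) : v 1 y = 1 - y := by
  rw [v_succ]
  simp only [v_zero, mul_zero, add_zero, zero_add]
  norm_num

def MainProp (k : ℕ) : Prop :=
  (∀ y ∈ Icc (0:ℝ) (1/2), v (k+1) (1-y) - v k (1-y) ≤ v (k+1) y - v k y) ∧
  (∀ y y' : ℝ, 1/2 ≤ y → y ≤ y' → y' ≤ 1 → v (k+1) y' - v k y' ≤ v (k+1) y - v k y)

lemma prop_E {k : ℕ} (h : MainProp k) :
    ∀ b s : ℝ, 1/2 ≤ b → b ≤ 1 → 1 - b ≤ s → s ≤ b →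
      v (k+1) b - v k b ≤ v (k+1) s - v k s := by
  intro b s hb2 hb1 hs1 hs2
  rcases le_or_gt (1/2) s with hc | hc
  · exact h.2 s b hc hs2 hb1
  · have h1 : v (k+1) b - v k b ≤ v (k+1) (1-s) - v k (1-s) :=
      h.2 (1-s) b (by linarith) (by linarith) hb1
    have h2 : v (k+1) (1-s) - v k (1-s) ≤ v (k+1) s - v k s :=
      h.1 s ⟨by linarith, le_of_lt hc⟩
    linarith

lemma main_ind : ∀ k : ℕ, MainProp k := by
  intro k
  induction k with
  | zero =>
      constructor
      · intro y hy
        simp only [Nat.zero_add, v_one, v_zero]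
        linarith [hy.2]
      · intro y y' h1 h2 h3
        simp only [Nat.zero_add, v_one, v_zero]
        linarith
  | succ k ih =>
      constructor
      · -- (a) for k+1
        intro y hy
        have hy01 : y ∈ Icc (0:ℝ) 1 := ⟨hy.1, by linarith [hy.2]⟩
        have h1y : (1-y) ∈ Icc (0:ℝ) 1 := ⟨by linarith [hy.2], by linarith [hy.1]⟩
        have hyle : y ≤ 1 - y := by linarith [hy.2]
        set m := v (k+1) (1-y) - v k (1-y) with hm
        have hma : m ≤ v (k+1) y - v k y := ih.1 y hy
        -- pointwise bound on the integrand
        have hpt : ∀ s ∈ Icc y (1-y),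
            max (v k y) (1 + v k s) + m ≤ max (v (k+1) y) (1 + v (k+1) s) := by
          intro s hs
          have hsE : v (k+1) (1-y) - v k (1-y) ≤ v (k+1) s - v k s :=
            prop_E ih (1-y) s (by linarith [hy.2]) (by linarith [hy.1]) (by simpa using hs.1)
              hs.2
          have h1 : v k y + m ≤ v (k+1) y := by linarith
          have h2 : 1 + v k s + m ≤ 1 + v (k+1) s := by rw [hm]; linarith
          calc max (v k y) (1 + v k s) + m
              = max (v k y + m) (1 + v k s + m) := (max_add_add_right _ _ _).symm
            _ ≤ max (v (k+1) y) (1 + v (k+1) s) := max_le_max h1 h2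
        have hintb : (∫ s in y..(1-y), (max (v k y) (1 + v k s) + m))
            ≤ ∫ s in y..(1-y), max (v (k+1) y) (1 + v (k+1) s) :=
          intervalIntegral.integral_mono_on hyle
            ((aux_intble' (v_antitoneOn k) _ hy01 h1y).add (intervalIntegrable_const (c := m)))
            (aux_intble' (v_antitoneOn (k+1)) _ hy01 h1y) hpt
        rw [intervalIntegral.integral_add (aux_intble' (v_antitoneOn k) _ hy01 h1y)
          (intervalIntegrable_const (c := m)), intervalIntegral.integral_const,
          smul_eq_mul] at hintb
        have e1 := id_f k hy
        have e2 := id_f (k+1) hy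
        have hgoal : v (k+1) y - v (k+1) (1-y) ≤ v (k+2) y - v (k+2) (1-y) := by
          rw [e1, e2]
          nlinarith [hy.1, hma]
        linarith
      · -- (b) for k+1
        intro y y' h12 hle h1
        have hy : y ∈ Icc (1/2:ℝ) 1 := ⟨h12, by linarith⟩
        have hy' : y' ∈ Icc (1/2:ℝ) 1 := ⟨by linarith, h1⟩
        have h1y : (1-y) ∈ Icc (0:ℝ) 1 := ⟨by linarith, by linarith⟩
        have h1y' : (1-y') ∈ Icc (0:ℝ) 1 := ⟨by linarith, by linarith⟩
        have e1 := id_dd k hy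
        have e2 := id_dd k hy'
        have hsplit := intervalIntegral.integral_add_adjacent_intervals
          (f := fun s => v (k+1) s - v k s) (μ := volume) (a := (0:ℝ)) (b := 1-y') (c := 1-y)
          (dd_intble k (by norm_num) h1y') (dd_intble k h1y' h1y)
        have hlow : (y' - y) * (v (k+1) y' - v k y')
            ≤ ∫ s in (1-y')..(1-y), (v (k+1) s - v k s) := by
          have := intervalIntegral.integral_mono_on (by linarith : 1-y' ≤ 1-y)
            (intervalIntegrable_const (c := v (k+1) y' - v k y'))
            (dd_intble k h1y' h1y)
            (fun s hs => prop_E ih y' s hy'.1 hy'.2 (by linarith [hs.1]) (by linarith [hs.2, h12]))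
          rw [intervalIntegral.integral_const, smul_eq_mul] at this
          calc (y'-y) * (v (k+1) y' - v k y')
              = (1 - y - (1 - y')) * (v (k+1) y' - v k y') := by ring
            _ ≤ _ := this
        have hbb : v (k+1) y' - v k y' ≤ v (k+1) y - v k y := ih.2 y y' h12 hle h1
        rw [e1, e2, ← hsplit]
        nlinarith

/-- The optimal threshold function:
`g k y = inf {x ∈ [y,1] : v (k-1) y ≤ 1 + v (k-1) (1-x)}`. -/
noncomputable def g (k : ℕ) (y : ℝ) : ℝ :=
  sInf {x : ℝ | x ∈ Set.Icc y 1 ∧ v (k-1) y ≤ 1 + v (k-1) (1 - x)}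

/-- The minimal fixed point `ξ k = inf {y ∈ [0,1] : g k y = y}`. -/
noncomputable def xi (k : ℕ) : ℝ :=
  sInf {y : ℝ | y ∈ Set.Icc (0:ℝ) 1 ∧ g k y = y}

lemma g_succ (m : ℕ) (y : ℝ) :
    g (m+1) y = sInf {x : ℝ | x ∈ Set.Icc y 1 ∧ v m y ≤ 1 + v m (1 - x)} := by
  simp [g]

lemma S_one_mem (m : ℕ) {y : ℝ} (hy : y ∈ Icc (0:ℝ) 1) :
    (1:ℝ) ∈ {x : ℝ | x ∈ Set.Icc y 1 ∧ v m y ≤ 1 + v m (1 - x)} := by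
  refine ⟨⟨hy.2, le_refl _⟩, ?_⟩
  have h0 : (0:ℝ) ∈ Icc (0:ℝ) 1 := by norm_num
  have := v_antitoneOn m h0 hy hy.1
  simpa using by linarith

lemma S_bddBelow (m : ℕ) (y : ℝ) :
    BddBelow {x : ℝ | x ∈ Set.Icc y 1 ∧ v m y ≤ 1 + v m (1 - x)} :=
  ⟨y, fun x hx => hx.1.1⟩

lemma fp_iff (m : ℕ) {y : ℝ} (hy : y ∈ Icc (0:ℝ) 1) (hy1 : y < 1) :
    g (m+1) y = y ↔ v m y ≤ 1 + v m (1 - y) := by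
  rw [g_succ]
  constructor
  · intro hfix
    apply le_of_forall_pos_le_add
    intro ε hε
    have hm1 : (0:ℝ) < (m:ℝ)^2 + 1 := by positivity
    set δ : ℝ := min (1 - y) (ε / ((m:ℝ)^2 + 1)) with hδ
    have hδpos : 0 < δ := lt_min (by linarith) (by positivity)
    have hlt : sInf {x : ℝ | x ∈ Set.Icc y 1 ∧ v m y ≤ 1 + v m (1 - x)} < y + δ := by
      rw [hfix]; linarith
    obtain ⟨x1, hx1mem, hx1lt⟩ := exists_lt_of_csInf_lt ⟨1, S_one_mem m hy⟩ hlt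
    have hx1a : y ≤ x1 := hx1mem.1.1
    have hx1b : x1 ≤ 1 := hx1mem.1.2
    have hin1 : (1 - x1) ∈ Icc (0:ℝ) 1 := ⟨by linarith, by linarith [hy.1]⟩
    have hin2 : (1 - y) ∈ Icc (0:ℝ) 1 := ⟨by linarith [hy.2], by linarith [hy.1]⟩
    have hlip := v_lip m (1 - x1) hin1 (1 - y) hin2 (by linarith)
    have hδ2 : δ ≤ ε / ((m:ℝ)^2 + 1) := min_le_right _ _
    have hmε : (m:ℝ)^2 * ((1 - y) - (1 - x1)) ≤ ε := by
      have h1 : (1 - y) - (1 - x1) = x1 - y := by ring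
      rw [h1]
      have h2 : x1 - y ≤ δ := by linarith
      have h3 : (m:ℝ)^2 * (x1 - y) ≤ (m:ℝ)^2 * δ :=
        mul_le_mul_of_nonneg_left h2 (by positivity)
      have h4 : (m:ℝ)^2 * δ ≤ (m:ℝ)^2 * (ε / ((m:ℝ)^2 + 1)) :=
        mul_le_mul_of_nonneg_left hδ2 (by positivity)
      have h5 : (m:ℝ)^2 * (ε / ((m:ℝ)^2 + 1)) ≤ ε := by
        rw [mul_div_assoc']
        rw [div_le_iff₀ hm1]
        nlinarith
      linarith
    have := hx1mem.2
    linarith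
  · intro hcond
    apply le_antisymm
    · exact csInf_le (S_bddBelow m y) ⟨⟨le_refl _, hy.2⟩, hcond⟩
    · exact le_csInf ⟨1, S_one_mem m hy⟩ (fun x hx => hx.1.1)

lemma g_one (m : ℕ) : g (m+1) 1 = 1 := by
  rw [g_succ]
  apply le_antisymm
  · exact csInf_le (S_bddBelow m 1) (S_one_mem m (by norm_num))
  · exact le_csInf ⟨1, S_one_mem m (by norm_num)⟩ (fun x hx => hx.1.1)

lemma F_subset (m : ℕ) :
    {y : ℝ | y ∈ Set.Icc (0:ℝ) 1 ∧ g (m+2) y = y} ⊆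
      {y : ℝ | y ∈ Set.Icc (0:ℝ) 1 ∧ g (m+1) y = y} := by
  intro y hy
  obtain ⟨hy01, hfix⟩ := hy
  refine ⟨hy01, ?_⟩
  rcases eq_or_lt_of_le hy01.2 with h1 | h1
  · rw [h1]; exact g_one m
  · have hcond : v (m+1) y ≤ 1 + v (m+1) (1 - y) := by
      have := (fp_iff (m+1) hy01 h1).mp hfix
      exact this
    have hgoal : v m y ≤ 1 + v m (1 - y) := by
      rcases le_or_gt y (1/2) with h2 | h2
      · have := (main_ind m).1 y ⟨hy01.1, h2⟩
        linarith
      · have hin2 : (1 - y) ∈ Icc (0:ℝ) 1 := ⟨by linarith [hy01.2], by linarith [hy01.1]⟩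
        have := v_antitoneOn m hin2 hy01 (by linarith)
        linarith
    exact (fp_iff m hy01 h1).mpr hgoal

/-- The minimal fixed points form a non-decreasing sequence. -/
theorem minimal_fixed_point_monotone :
    ∀ k : ℕ, 1 ≤ k → xi k ≤ xi (k+1) := by
  intro k hk
  obtain ⟨m, rfl⟩ := Nat.exists_eq_add_of_le hk
  have hm : 1 + m = m + 1 := by ring
  rw [hm]
  unfold xi
  apply csInf_le_csInf
  · exact ⟨0, fun x hx => hx.1.1⟩
  · exact ⟨1, ⟨by norm_num, g_one (m+1)⟩⟩
  · exact F_subset m
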